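/- Let Ω ⊂ ℂⁿ be a bounded domain, {z_n} ⊂ cl(Ω) a sequence converging to z ∈ cl(Ω), and μ_n ∈ J^m_{z_n} for each n. Then there exists a subsequence {μ_{n_j}} converging in the weak-* topology to some measure μ ∈ J^m_z. -/

import Mathlib

open MeasureTheory Topology Filter

noncomputable section


instance euclideanComplexMeasureSpace (n : ℕ) : MeasureSpace (EuclideanSpace ℂ (Fin n)) :=
  { volume := Measure.map (WithLp.toLp 2) (volume : Measure (Fin n → ℂ)) }

instance euclideanComplexBorel (n : ℕ) : BorelSpace (EuclideanSpace ℂ (Fin n)) :=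
  inferInstance

/-- The mixed determinant of `n` complex `n × n` matrices: the full polarization of `det`,
up to a positive factor `n!`. -/
def mixedDet {n : ℕ} (A : Fin n → Matrix (Fin n) (Fin n) ℂ) : ℂ :=
  ∑ σ : Equiv.Perm (Fin n), Matrix.det (Matrix.of fun i j => A (σ j) i j)

/-- The standard basis of `ℂⁿ`. -/
def stdB (n : ℕ) (i : Fin n) : EuclideanSpace ℂ (Fin n) := EuclideanSpace.single i 1

/-- The complex Hessian matrix `(∂²f/∂zⱼ∂z̄ₖ)` expressed via real second derivatives. -/
def cHessian {n : ℕ} (f : EuclideanSpace ℂ (Fin n) → ℝ) (z : EuclideanSpace ℂ (Fin n)) :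
    Matrix (Fin n) (Fin n) ℂ :=
  Matrix.of fun j k =>
    (((1 : ℂ)/4) * ((((fderiv ℝ (fun x => fderiv ℝ f x (stdB n j)) z) (stdB n k)
        + (fderiv ℝ (fun x => fderiv ℝ f x (Complex.I • stdB n j)) z) (Complex.I • stdB n k)) : ℝ) : ℂ))
      + ((Complex.I/4) * ((((fderiv ℝ (fun x => fderiv ℝ f x (Complex.I • stdB n j)) z) (stdB n k)
        - (fderiv ℝ (fun x => fderiv ℝ f x (stdB n j)) z) (Complex.I • stdB n k)) : ℝ) : ℂ))

/-- The Gårding cone `Γ_m` of constant-coefficient `(1,1)`-forms, identified with Hermitian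
matrices `α` such that `α^p ∧ β^(n-p) ≥ 0` for `p = 1, …, m` (expressed via mixed
determinants with the identity, which corresponds to `β = dd^c|z|²`). -/
def GammaM (n m : ℕ) : Set (Matrix (Fin n) (Fin n) ℂ) :=
  {A | A.IsHermitian ∧ ∀ p : ℕ, 1 ≤ p → p ≤ m →
    0 ≤ (mixedDet (fun i : Fin n => if (i : ℕ) < p then A else 1)).re}

/-- The density of `dd^c φ ∧ α₁ ∧ ⋯ ∧ α_{m-1} ∧ β^{n-m}` with respect to Lebesgue measure,
up to a positive dimensional constant. -/
def mshOp {n : ℕ} (m : ℕ) (A : Fin (m - 1) → Matrix (Fin n) (Fin n) ℂ)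
    (φ : EuclideanSpace ℂ (Fin n) → ℝ) (z : EuclideanSpace ℂ (Fin n)) : ℝ :=
  (mixedDet (fun i : Fin n =>
    if (i : ℕ) = 0 then cHessian φ z
    else if h : (i : ℕ) - 1 < m - 1 then A ⟨(i : ℕ) - 1, h⟩ else 1)).re

/-- `u` is `m`-subharmonic on `Ω` in the sense of Caffarelli–Nirenberg–Spruck: `u` is upper
semicontinuous, locally integrable, and `dd^c u ∧ α₁ ∧ ⋯ ∧ α_{m-1} ∧ β^{n-m} ≥ 0` holds in
the sense of currents (tested against nonnegative smooth compactly supported functions)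
for all `α₁, …, α_{m-1} ∈ Γ_m`. -/
def MSubharmonicOn {n : ℕ} (m : ℕ) (u : EuclideanSpace ℂ (Fin n) → ℝ)
    (Ω : Set (EuclideanSpace ℂ (Fin n))) : Prop :=
  UpperSemicontinuousOn u Ω ∧ LocallyIntegrableOn u Ω ∧
  ∀ A : Fin (m - 1) → Matrix (Fin n) (Fin n) ℂ, (∀ i, A i ∈ GammaM n m) →
  ∀ φ : EuclideanSpace ℂ (Fin n) → ℝ, ContDiff ℝ (⊤ : ℕ∞) φ → HasCompactSupport φ →
    tsupport φ ⊆ Ω → (∀ z, 0 ≤ φ z) →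
  0 ≤ ∫ z in Ω, u z * mshOp m A φ z

/-- `Ω` is `m`-hyperconvex: it admits a negative `m`-subharmonic exhaustion function,
i.e. all sublevel sets `{ψ < c}`, `c < 0`, are relatively compact in `Ω`. -/
def MHyperconvex {n : ℕ} (m : ℕ) (Ω : Set (EuclideanSpace ℂ (Fin n))) : Prop :=
  ∃ ψ : EuclideanSpace ℂ (Fin n) → ℝ, MSubharmonicOn m ψ Ω ∧ (∀ z ∈ Ω, ψ z < 0) ∧
    ∀ c : ℝ, c < 0 → closure {z ∈ Ω | ψ z < c} ⊆ Ω

/-- Jensen measures with barycenter `z` w.r.t. the cone `SH_m(Ω) ∩ C(cl Ω)`. -/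
def IsJensen {n : ℕ} (m : ℕ) (Ω : Set (EuclideanSpace ℂ (Fin n)))
    (z : EuclideanSpace ℂ (Fin n)) (μ : Measure (EuclideanSpace ℂ (Fin n))) : Prop :=
  IsProbabilityMeasure μ ∧ μ (closure Ω)ᶜ = 0 ∧
  ∀ u : EuclideanSpace ℂ (Fin n) → ℝ, MSubharmonicOn m u Ω → ContinuousOn u (closure Ω) →
    u z ≤ ∫ x in closure Ω, u x ∂μ


section Aux

open Set BoundedContinuousFunction NNReal ENNReal

section Core

set_option linter.unusedSectionVars false

variable {X : Type*} [MetricSpace X] [CompactSpace X] [SecondCountableTopology X]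
  [MeasurableSpace X] [BorelSpace X]

-- step 0: basic integral estimate
lemma integral_dist_est (μ : Measure X) [IsProbabilityMeasure μ] (f h : X →ᵇ ℝ) :
    |∫ x, f x ∂μ - ∫ x, h x ∂μ| ≤ dist f h := by
  rw [← integral_sub (f.integrable μ) (h.integrable μ)]
  calc |∫ x, (f x - h x) ∂μ| ≤ ‖f - h‖ * (μ Set.univ).toReal := by
        rw [← Real.norm_eq_abs]
        apply norm_integral_le_of_norm_le_const
        filter_upwards with x
        calc ‖f x - h x‖ = ‖(f - h) x‖ := by simp
          _ ≤ ‖f - h‖ := (f - h).norm_coe_le_norm x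
    _ = dist f h := by simp [measure_univ, dist_eq_norm]

lemma exists_subseq_integral_tendsto (νs : ℕ → Measure X)
    (hνs : ∀ k, IsProbabilityMeasure (νs k)) :
    ∃ φ : ℕ → ℕ, StrictMono φ ∧ ∀ f : X →ᵇ ℝ, ∃ c : ℝ,
      Tendsto (fun j => ∫ x, f x ∂(νs (φ j))) atTop (𝓝 c) := by
  haveI := hνs
  have : Nonempty X := by
    by_contra hne
    rw [not_nonempty_iff] at hne
    have h1 : (νs 0) Set.univ = 1 := measure_univ
    rw [Set.univ_eq_empty_iff.mpr hne] at h1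
    simp at h1
  -- dense sequence in C(X, ℝ)
  obtain ⟨g, hg⟩ := TopologicalSpace.exists_dense_seq C(X, ℝ)
  set T : ℕ → ℕ → ℝ := fun k i => ∫ x, g i x ∂(νs k) with hT
  have hTS : ∀ k, T k ∈ Set.pi Set.univ (fun i => Icc (-‖g i‖) ‖g i‖) := by
    intro k i _
    rw [mem_Icc, ← abs_le]
    have : |∫ x, g i x ∂(νs k)| ≤ ‖g i‖ * ((νs k) Set.univ).toReal := by
      rw [← Real.norm_eq_abs]
      apply norm_integral_le_of_norm_le_const
      filter_upwards with x
      calc ‖g i x‖ = ‖mkOfCompact (g i) x‖ := by simp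
        _ ≤ ‖mkOfCompact (g i)‖ := (mkOfCompact (g i)).norm_coe_le_norm x
        _ = ‖g i‖ := by rw [norm_mkOfCompact]
    simpa [measure_univ] using this
  obtain ⟨h0, -, φ, hφ, hlim⟩ :=
    (isCompact_univ_pi (fun i => isCompact_Icc)).isSeqCompact hTS
  refine ⟨φ, hφ, fun f => ?_⟩
  have hTi : ∀ i, Tendsto (fun j => T (φ j) i) atTop (𝓝 (h0 i)) := by
    intro i
    exact (tendsto_pi_nhds.mp hlim) i
  -- Cauchy
  have hC : CauchySeq (fun j => ∫ x, f x ∂(νs (φ j))) := by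
    rw [Metric.cauchySeq_iff]
    intro ε hε
    obtain ⟨i, hi⟩ := Metric.denseRange_iff.mp hg f.toContinuousMap (ε/4) (by linarith)
    have hgc : CauchySeq (fun j => T (φ j) i) := (hTi i).cauchySeq
    obtain ⟨N, hN⟩ := Metric.cauchySeq_iff.mp hgc (ε/4) (by linarith)
    refine ⟨N, fun a ha b hb => ?_⟩
    have key : ∀ j, |∫ x, f x ∂(νs (φ j)) - T (φ j) i| ≤ ε/4 := by
      intro j
      calc |∫ x, f x ∂(νs (φ j)) - T (φ j) i|
          = |∫ x, f x ∂(νs (φ j)) - ∫ x, mkOfCompact (g i) x ∂(νs (φ j))| := by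
            simp [hT]
        _ ≤ dist f (mkOfCompact (g i)) := integral_dist_est _ _ _
        _ ≤ ε/4 := by
            have : dist f.toContinuousMap (g i) < ε/4 := by
              exact hi
            rw [← dist_mkOfCompact, show mkOfCompact f.toContinuousMap = f by ext; rfl] at this
            exact this.le
    have h1 := key a
    have h2 := key b
    have h3 := hN a ha b hb
    rw [Real.dist_eq] at h3 ⊢
    calc |∫ x, f x ∂(νs (φ a)) - ∫ x, f x ∂(νs (φ b))|
        ≤ |∫ x, f x ∂(νs (φ a)) - T (φ a) i| + |T (φ a) i - ∫ x, f x ∂(νs (φ b))| :=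
          abs_sub_le _ _ _
      _ ≤ |∫ x, f x ∂(νs (φ a)) - T (φ a) i| + (|T (φ a) i - T (φ b) i|
          + |T (φ b) i - ∫ x, f x ∂(νs (φ b))|) := by
          have := abs_sub_le (T (φ a) i) (T (φ b) i) (∫ x, f x ∂(νs (φ b)))
          linarith
      _ < ε := by
          have h2' : |T (φ b) i - ∫ x, f x ∂(νs (φ b))| ≤ ε/4 := by
            rw [abs_sub_comm]; exact h2
          linarith
  exact cauchySeq_tendsto_of_complete hC

end Core

section Core2

set_option linter.unusedSectionVars false
set_option maxHeartbeats 1000000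

variable {X : Type*} [MetricSpace X] [CompactSpace X] [SecondCountableTopology X]
  [MeasurableSpace X] [BorelSpace X]

/-- coercion of `ℝ≥0`-valued BCF to `ℝ`-valued. -/
def toRealBCF {X : Type*} [TopologicalSpace X] (f : X →ᵇ ℝ≥0) : X →ᵇ ℝ :=
  BoundedContinuousFunction.comp _ (isometry_subtype_coe.lipschitz) f

@[simp] lemma toRealBCF_apply {X : Type*} [TopologicalSpace X] (f : X →ᵇ ℝ≥0) (x : X) :
    toRealBCF f x = (f x : ℝ) := rfl

theorem prokhorov_compact (νs : ℕ → Measure X) (hνs : ∀ k, IsProbabilityMeasure (νs k)) :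
    ∃ φ : ℕ → ℕ, StrictMono φ ∧ ∃ ν : Measure X, IsProbabilityMeasure ν ∧
      ∀ f : X →ᵇ ℝ, Tendsto (fun j => ∫ x, f x ∂(νs (φ j))) atTop (𝓝 (∫ x, f x ∂ν)) := by
  haveI := hνs
  obtain ⟨φ, hφ, hex⟩ := exists_subseq_integral_tendsto νs hνs
  choose L hL using hex
  -- properties of L
  have Lnonneg : ∀ f : X →ᵇ ℝ, (∀ x, 0 ≤ f x) → 0 ≤ L f := by
    intro f hf
    apply ge_of_tendsto' (hL f)
    intro j
    exact integral_nonneg fun x => hf x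
  have Lmono : ∀ f h : X →ᵇ ℝ, (∀ x, f x ≤ h x) → L f ≤ L h := by
    intro f h hfh
    apply le_of_tendsto_of_tendsto' (hL f) (hL h)
    intro j
    exact integral_mono (f.integrable _) (h.integrable _) hfh
  have Ladd : ∀ f h : X →ᵇ ℝ, L (f + h) = L f + L h := by
    intro f h
    apply tendsto_nhds_unique (hL (f + h))
    have : (fun j => ∫ x, (f + h) x ∂(νs (φ j)))
        = fun j => (∫ x, f x ∂(νs (φ j))) + ∫ x, h x ∂(νs (φ j)) := by
      funext j
      simp only [BoundedContinuousFunction.coe_add, Pi.add_apply]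
      exact integral_add (f.integrable _) (h.integrable _)
    rw [this]
    exact (hL f).add (hL h)
  have Lsmul : ∀ (c : ℝ) (f : X →ᵇ ℝ), L (c • f) = c * L f := by
    intro c f
    apply tendsto_nhds_unique (hL (c • f))
    have : (fun j => ∫ x, (c • f) x ∂(νs (φ j)))
        = fun j => c * ∫ x, f x ∂(νs (φ j)) := by
      funext j
      simp only [BoundedContinuousFunction.coe_smul, Pi.smul_apply, smul_eq_mul]
      rw [← integral_const_mul]
    rw [this]
    exact (hL f).const_mul c
  have Lone : L 1 = 1 := by
    apply tendsto_nhds_unique (hL 1)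
    have : (fun j => ∫ x, (1 : X →ᵇ ℝ) x ∂(νs (φ j))) = fun _ => (1 : ℝ) := by
      funext j
      simp [BoundedContinuousFunction.coe_one]
    rw [this]
    exact tendsto_const_nhds
  -- the functional on nonnegative functions
  set Λf : (X →ᵇ ℝ≥0) → ℝ≥0 := fun f => (L (toRealBCF f)).toNNReal with hΛf
  have toR_nonneg : ∀ f : X →ᵇ ℝ≥0, ∀ x, 0 ≤ toRealBCF f x := fun f x => (f x).2
  have Λf_coe : ∀ f : X →ᵇ ℝ≥0, (Λf f : ℝ) = L (toRealBCF f) := by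
    intro f
    simp only [hΛf, Real.coe_toNNReal', max_eq_left_iff]
    exact Lnonneg _ (toR_nonneg f)
  have Λmono : ∀ f g : X →ᵇ ℝ≥0, (∀ x, f x ≤ g x) → Λf f ≤ Λf g := by
    intro f g h
    exact Real.toNNReal_mono (Lmono _ _ fun x => by exact_mod_cast h x)
  set Λ : (X →ᵇ ℝ≥0) →ₗ[ℝ≥0] ℝ≥0 :=
    { toFun := Λf
      map_add' := by
        intro f g
        have he : toRealBCF (f + g) = toRealBCF f + toRealBCF g := by
          ext x; simp
        simp only [hΛf, he, Ladd]
        rw [Real.toNNReal_add (Lnonneg _ (toR_nonneg f)) (Lnonneg _ (toR_nonneg g))]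
      map_smul' := by
        intro c f
        have he : toRealBCF (c • f) = (c : ℝ) • toRealBCF f := by
          ext x; simp [NNReal.smul_def]
        simp only [hΛf, he, Lsmul, RingHom.id_apply]
        rw [Real.toNNReal_mul (by positivity), Real.toNNReal_coe]
        rfl } with hΛ
  have Λ_apply : ∀ f : X →ᵇ ℝ≥0, Λ f = Λf f := fun f => rfl
  have Λone : Λ (1 : X →ᵇ ℝ≥0) = 1 := by
    rw [Λ_apply, hΛf]
    have : toRealBCF (1 : X →ᵇ ℝ≥0) = 1 := by ext x; simp
    simp [this, Lone]
  set Λc : CompactlySupportedContinuousMap X ℝ≥0 →ₗ[ℝ≥0] ℝ≥0 :=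
    { toFun := fun f => Λ (f : X →ᵇ ℝ≥0)
      map_add' := fun f g => (congrArg Λ (by ext x; rfl)).trans (map_add Λ _ _)
      map_smul' := fun c f => (congrArg Λ (by ext x; rfl)).trans (map_smul Λ c _) } with hΛc
  have Λc_apply : ∀ f : CompactlySupportedContinuousMap X ℝ≥0, Λc f = Λ (f : X →ᵇ ℝ≥0) :=
    fun f => rfl
  -- the content
  set C : MeasureTheory.Content X :=
    { toFun := rieszContentAux Λc
      mono' := fun K₁ K₂ h => rieszContentAux_mono Λc h
      sup_le' := fun K₁ K₂ => rieszContentAux_sup_le Λc K₁ K₂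
      sup_disjoint' := by
        intro K₁ K₂ hdisj _ _
        exact rieszContentAux_union Λc hdisj } with hC
  set ν : Measure X := C.measure with hν
  have hCcompacts : ∀ K : TopologicalSpace.Compacts X, (C K : ℝ≥0∞) = (rieszContentAux Λc K : ℝ≥0∞) :=
    fun K => rfl
  have hopen : ∀ U : Set X, (hU : IsOpen U) →
      ν U = C.innerContent ⟨U, hU⟩ := by
    intro U hU
    rw [hν, C.measure_apply hU.measurableSet]
    exact C.outerMeasure_opens ⟨U, hU⟩
  have hTop : rieszContentAux Λc ⊤ = 1 := by
    apply le_antisymm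
    · have : Λc (CompactlySupportedContinuousMap.continuousMapEquiv 1) ∈ Λc '' { f : CompactlySupportedContinuousMap X ℝ≥0 | ∀ x ∈ (⊤ : TopologicalSpace.Compacts X), (1 : ℝ≥0) ≤ f x } := by
        refine ⟨_, fun x _ => le_rfl, rfl⟩
      have h := csInf_le (OrderBot.bddBelow _) this
      have e : Λc (CompactlySupportedContinuousMap.continuousMapEquiv 1) = Λ 1 := by
        show Λ _ = Λ 1
        exact congrArg Λ (by ext x; rfl)
      rwa [e, Λone] at h
    · apply le_csInf (rieszContentAux_image_nonempty Λc ⊤)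
      rintro b ⟨f, hf, rfl⟩
      rw [Λc_apply]
      have : Λ (1 : X →ᵇ ℝ≥0) ≤ Λ (f : X →ᵇ ℝ≥0) := by
        rw [Λ_apply, Λ_apply]
        apply Λmono
        intro x
        simpa using hf x (by trivial)
      rwa [Λone] at this
  have νuniv : ν Set.univ = 1 := by
    rw [hopen Set.univ isOpen_univ]
    have := C.innerContent_of_isCompact (K := Set.univ) isCompact_univ isOpen_univ
    rw [this]
    rw [hCcompacts ⟨Set.univ, isCompact_univ⟩]
    norm_cast
  haveI hνprob : IsProbabilityMeasure ν := ⟨νuniv⟩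
  -- the open-sets liminf estimate
  have h_opens : ∀ G : Set X, IsOpen G → ν G ≤ atTop.liminf (fun j => νs (φ j) G) := by
    intro G hG
    rw [hopen G hG]
    rw [MeasureTheory.Content.innerContent]
    apply iSup₂_le
    intro K hK
    obtain ⟨u, hu0, hu1, hu01⟩ := exists_continuous_zero_one_of_isClosed
      (isClosed_compl_iff.mpr hG) K.isCompact.isClosed
      (Set.disjoint_left.mpr fun x hx hxK => hx (hK hxK))
    set u' : X →ᵇ ℝ≥0 := (BoundedContinuousFunction.mkOfCompact u).nnrealPart with hu'
    have hu'le_of : ∀ x, (u' x : ℝ) ≤ 1 := by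
      intro x
      simp only [hu', BoundedContinuousFunction.nnrealPart_coeFn_eq, Function.comp_apply,
        BoundedContinuousFunction.mkOfCompact_apply, Real.coe_toNNReal']
      exact max_le (hu01 x).2 zero_le_one
    have step1 : (C K : ℝ≥0∞) ≤ ((Λ u' : ℝ≥0) : ℝ≥0∞) := by
      rw [hCcompacts]
      apply ENNReal.coe_le_coe.mpr
      refine le_of_le_of_eq (rieszContentAux_le Λc
        (f := CompactlySupportedContinuousMap.continuousMapEquiv u'.toContinuousMap) ?_) rfl
      intro x hx
      show (1 : ℝ≥0) ≤ u' x
      have : u' x = 1 := by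
        simp only [hu', BoundedContinuousFunction.nnrealPart_coeFn_eq, Function.comp_apply,
          BoundedContinuousFunction.mkOfCompact_apply, hu1 hx]
        simp
      rw [this]
    have hint : ∀ j, ENNReal.ofReal (∫ x, toRealBCF u' x ∂(νs (φ j))) ≤ νs (φ j) G := by
      intro j
      apply integral_le_measure
      · intro x _
        simp only [toRealBCF_apply]
        exact_mod_cast hu'le_of x
      · intro x hx
        simp only [toRealBCF_apply, hu', BoundedContinuousFunction.nnrealPart_coeFn_eq,
          Function.comp_apply, BoundedContinuousFunction.mkOfCompact_apply, hu0 hx]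
        simp
    have step2 : ((Λ u' : ℝ≥0) : ℝ≥0∞) ≤ atTop.liminf (fun j => νs (φ j) G) := by
      have hcoe : ((Λ u' : ℝ≥0) : ℝ≥0∞) = ENNReal.ofReal (L (toRealBCF u')) := by
        rw [Λ_apply]
        rfl
      rw [hcoe]
      have htend : Tendsto (fun j => ENNReal.ofReal (∫ x, toRealBCF u' x ∂(νs (φ j)))) atTop
          (𝓝 (ENNReal.ofReal (L (toRealBCF u')))) :=
        (ENNReal.continuous_ofReal.continuousAt).tendsto.comp (hL (toRealBCF u'))
      calc ENNReal.ofReal (L (toRealBCF u'))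
          = atTop.liminf (fun j => ENNReal.ofReal (∫ x, toRealBCF u' x ∂(νs (φ j)))) :=
            htend.liminf_eq.symm
        _ ≤ atTop.liminf (fun j => νs (φ j) G) :=
            liminf_le_liminf (Filter.Eventually.of_forall hint)
    exact le_trans step1 step2
  refine ⟨φ, hφ, ν, hνprob, fun f => ?_⟩
  apply BoundedContinuousFunction.tendsto_integral_of_forall_integral_le_liminf_integral
  intro f₀ hf₀
  exact integral_le_liminf_integral_of_forall_isOpen_measure_le_liminf_measure hf₀ h_opens

end Core2


end Aux

/-- weak-* compactness of Jensen measures: if `z_k → z` in `cl Ω` and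
`μ_k ∈ J^m_(z_k)`, then some subsequence converges weak-* to a measure `μ ∈ J^m_z`. -/
theorem jensen_weakstar_compact {n : ℕ} (hn : 1 ≤ n) (m : ℕ) (hm1 : 1 ≤ m) (hmn : m ≤ n)
    (Ω : Set (EuclideanSpace ℂ (Fin n))) (hΩo : IsOpen Ω) (hΩc : IsConnected Ω)
    (hΩb : Bornology.IsBounded Ω)
    (z : EuclideanSpace ℂ (Fin n)) (hz : z ∈ closure Ω)
    (zs : ℕ → EuclideanSpace ℂ (Fin n)) (hzs : ∀ k, zs k ∈ closure Ω)
    (hconv : Tendsto zs atTop (nhds z))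
    (μs : ℕ → Measure (EuclideanSpace ℂ (Fin n))) (hμs : ∀ k, IsJensen m Ω (zs k) (μs k)) :
    ∃ φ : ℕ → ℕ, StrictMono φ ∧ ∃ μ : Measure (EuclideanSpace ℂ (Fin n)), IsJensen m Ω z μ ∧
      ∀ f : EuclideanSpace ℂ (Fin n) → ℝ, Continuous f →
        Tendsto (fun j => ∫ x in closure Ω, f x ∂(μs (φ j))) atTop
          (nhds (∫ x in closure Ω, f x ∂μ)) := by
  classical
  have hKc : IsCompact (closure Ω) := Metric.isCompact_of_isClosed_isBounded
    isClosed_closure hΩb.closure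
  haveI : CompactSpace ↥(closure Ω) := isCompact_iff_compactSpace.mp hKc
  have hKm : MeasurableSet (closure Ω) := isClosed_closure.measurableSet
  have hmemb : MeasurableEmbedding (Subtype.val : ↥(closure Ω) → EuclideanSpace ℂ (Fin n)) :=
    MeasurableEmbedding.subtype_coe hKm
  set νs : ℕ → Measure ↥(closure Ω) :=
    fun k => (μs k).comap Subtype.val with hνsdef
  have hprob : ∀ k, IsProbabilityMeasure (νs k) := by
    intro k
    constructor
    rw [hνsdef]
    rw [comap_subtype_coe_apply hKm, Set.image_univ, Subtype.range_coe]
    have h1 := measure_add_measure_compl (μ := μs k) hKm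
    rw [(hμs k).2.1, add_zero] at h1
    rw [h1]
    exact (hμs k).1.measure_univ
  obtain ⟨φ, hφ, ν, hνprob, hνconv⟩ := prokhorov_compact νs hprob
  set μlim : Measure (EuclideanSpace ℂ (Fin n)) := ν.map Subtype.val with hμlim
  have hcomap : μlim.comap Subtype.val = ν := hmemb.comap_map ν
  -- transfer of integrals
  have htrans : ∀ (k : ℕ) (f : EuclideanSpace ℂ (Fin n) → ℝ),
      ∫ x in closure Ω, f x ∂(μs k) = ∫ y, f (y : EuclideanSpace ℂ (Fin n)) ∂(νs k) :=
    fun k f => (integral_subtype_comap hKm f).symm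
  have htransLim : ∀ f : EuclideanSpace ℂ (Fin n) → ℝ,
      ∫ x in closure Ω, f x ∂μlim = ∫ y, f (y : EuclideanSpace ℂ (Fin n)) ∂ν := by
    intro f
    rw [← hcomap]
    exact (integral_subtype_comap hKm f).symm
  -- bounded continuous restrictions
  have hres : ∀ f : EuclideanSpace ℂ (Fin n) → ℝ, ContinuousOn f (closure Ω) →
      ∃ F : BoundedContinuousFunction ↥(closure Ω) ℝ, ∀ y : ↥(closure Ω), F y = f (y : EuclideanSpace ℂ (Fin n)) := by
    intro f hf
    exact ⟨BoundedContinuousFunction.mkOfCompact ⟨(closure Ω).restrict f, hf.restrict⟩,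
      fun y => rfl⟩
  have hconvAll : ∀ f : EuclideanSpace ℂ (Fin n) → ℝ, ContinuousOn f (closure Ω) →
      Tendsto (fun j => ∫ x in closure Ω, f x ∂(μs (φ j))) atTop
        (𝓝 (∫ x in closure Ω, f x ∂μlim)) := by
    intro f hf
    obtain ⟨F, hF⟩ := hres f hf
    have hFfun : ∀ μ' : Measure ↥(closure Ω), ∫ y, F y ∂μ'
        = ∫ y, f (y : EuclideanSpace ℂ (Fin n)) ∂μ' := by
      intro μ'
      congr 1
      funext y
      exact hF y
    have := hνconv F
    rw [hFfun] at this
    simp_rw [hFfun] at this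
    rw [htransLim f]
    convert this using 2 with j
    exact htrans (φ j) f
  refine ⟨φ, hφ, μlim, ⟨?_, ?_, ?_⟩, ?_⟩
  · exact Measure.isProbabilityMeasure_map measurable_subtype_coe.aemeasurable
  · rw [hμlim, MeasureTheory.Measure.map_apply measurable_subtype_coe hKm.compl]
    have : (Subtype.val : ↥(closure Ω) → EuclideanSpace ℂ (Fin n)) ⁻¹' (closure Ω)ᶜ = ∅ := by
      ext y
      simp [y.2]
    rw [this, measure_empty]
  · intro u hu hucont
    have h1 : Tendsto (fun j => u (zs (φ j))) atTop (𝓝 (u z)) := by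
      have hzs' : Tendsto (fun j => zs (φ j)) atTop (𝓝[closure Ω] z) :=
        tendsto_nhdsWithin_of_tendsto_nhds_of_eventually_within _
          (hconv.comp hφ.tendsto_atTop) (Filter.Eventually.of_forall fun j => hzs (φ j))
      exact (hucont z hz).tendsto.comp hzs'
    have h2 := hconvAll u hucont
    exact le_of_tendsto_of_tendsto' h1 h2 (fun j => (hμs (φ j)).2.2 u hu hucont)
  · intro f hf
    exact hconvAll f hf.continuousOn
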